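/- Let H be a weak Hopf algebra. The canonical map can: H ⊗_{H^L} H → C = Im(g) ⊆ H⊗H, can(h ⊗ k) = h k₍₁₎ ⊗ k₍₂₎, is bijective with inverse given by can⁻¹(1₍₁₎ ⊗ h 1₍₂₎) = 1₍₁₎ S(h₍₁₎ 1₍₂₎) ⊗_{H^L} h₍₂₎ 1₍₃₎. Hence H is a weak H-Galois extension of H^L. -/

import Mathlib

open TensorProduct LinearMap

/-- A weak bialgebra over a commutative ring `k`: a `k`-algebra with a
coalgebra structure whose comultiplication is multiplicative, the
compatibility of the counit with multiplication and of the unit with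
comultiplication being weakened to the weak bialgebra axioms. -/
structure WeakBialgebra (k H : Type) [CommRing k] [Ring H] [Algebra k H] where
  comul : H →ₗ[k] H ⊗[k] H
  counit : H →ₗ[k] k
  coassoc : ∀ h, (TensorProduct.assoc k H H H) ((rTensor H comul) (comul h)) =
    (lTensor H comul) (comul h)
  counit_comul : ∀ h, (TensorProduct.lid k H) ((rTensor H counit) (comul h)) = h
  comul_counit : ∀ h, (TensorProduct.rid k H) ((lTensor H counit) (comul h)) = h
  comul_mul : ∀ g h : H, comul (g * h) = comul g * comul h
  /-- `Δ²(1) = (Δ(1)⊗1)(1⊗Δ(1))` -/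
  weak_unit_l : rTensor H comul (comul 1) =
    (comul 1 ⊗ₜ[k] (1 : H)) *
      ((TensorProduct.assoc k H H H).symm ((1 : H) ⊗ₜ[k] comul 1))
  /-- `Δ²(1) = (1⊗Δ(1))(Δ(1)⊗1)` -/
  weak_unit_r : rTensor H comul (comul 1) =
    ((TensorProduct.assoc k H H H).symm ((1 : H) ⊗ₜ[k] comul 1)) *
      (comul 1 ⊗ₜ[k] (1 : H))
  /-- `ε(ghl) = ε(g h₍₁₎) ε(h₍₂₎ l)` -/
  weak_counit_l : ∀ g h l : H, counit (g * h * l) =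
    (LinearMap.mul' k k) ((TensorProduct.map (counit ∘ₗ mulLeft k g)
      (counit ∘ₗ mulRight k l)) (comul h))
  /-- `ε(ghl) = ε(g h₍₂₎) ε(h₍₁₎ l)` -/
  weak_counit_r : ∀ g h l : H, counit (g * h * l) =
    (LinearMap.mul' k k) ((TensorProduct.map (counit ∘ₗ mulRight k l)
      (counit ∘ₗ mulLeft k g)) (comul h))

/-- A right `H`-comodule algebra over a weak bialgebra `H`. -/
structure ComoduleAlgebra (k H A : Type) [CommRing k] [Ring H] [Algebra k H]
    [Ring A] [Algebra k A] (W : WeakBialgebra k H) where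
  rho : A →ₗ[k] A ⊗[k] H
  coassoc : ∀ a, (TensorProduct.assoc k A H H) ((rTensor H rho) (rho a)) =
    (lTensor A W.comul) (rho a)
  counit : ∀ a, (TensorProduct.rid k A) ((lTensor A W.counit) (rho a)) = a
  rho_mul : ∀ a b : A, rho (a * b) = rho a * rho b
  /-- `ρ²(1) = 1₍[0]₎ ⊗ 1₍[1]₎1₍₁₎ ⊗ 1₍₂₎` -/
  weak : rTensor H rho (rho 1) =
    ((rho 1) ⊗ₜ[k] (1 : H)) *
      ((TensorProduct.assoc k A H H).symm ((1 : A) ⊗ₜ[k] W.comul 1))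
variable (k H : Type) [CommRing k] [Ring H] [Algebra k H]

/-- `Π^L(h) = ε(1₍₁₎ h) 1₍₂₎`. -/
noncomputable def PiL (W : WeakBialgebra k H) : H → H := fun h =>
  (TensorProduct.lid k H)
    ((TensorProduct.map (W.counit ∘ₗ mulRight k h) LinearMap.id) (W.comul 1))

/-- `Π^R(h) = 1₍₁₎ ε(h 1₍₂₎)`. -/
noncomputable def PiR (W : WeakBialgebra k H) : H → H := fun h =>
  (TensorProduct.rid k H)
    ((TensorProduct.map LinearMap.id (W.counit ∘ₗ mulLeft k h)) (W.comul 1))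

/-- A weak Hopf algebra: a weak bialgebra with an antipode `S` satisfying
`h₍₁₎S(h₍₂₎) = Π^L(h)`, `S(h₍₁₎)h₍₂₎ = Π^R(h)` and
`S(h₍₁₎)h₍₂₎S(h₍₃₎) = S(h)`. -/
structure WeakHopfAlgebra (k H : Type) [CommRing k] [Ring H] [Algebra k H]
    extends WeakBialgebra k H where
  S : H →ₗ[k] H
  S_left : ∀ h : H, LinearMap.mul' k H
    ((TensorProduct.map LinearMap.id S) (comul h)) = PiL k H toWeakBialgebra h
  S_right : ∀ h : H, LinearMap.mul' k H
    ((TensorProduct.map S LinearMap.id) (comul h)) = PiR k H toWeakBialgebra h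
  S_mid : ∀ h : H, LinearMap.mul' k H
    ((TensorProduct.map (LinearMap.mul' k H ∘ₗ TensorProduct.map S LinearMap.id)
      S) ((rTensor H comul) (comul h))) = S h

variable (Wh : WeakHopfAlgebra k H)

/-- `H^L = Im(Π^L)`. -/
noncomputable def HLset : Set H := Set.range (PiL k H Wh.toWeakBialgebra)

/-- The canonical map at the level of `H ⊗ₖ H`:
`can(h ⊗ h') = h h'₍₁₎ ⊗ h'₍₂₎ = (h ⊗ 1) Δ(h')`. -/
noncomputable def canMap : H ⊗[k] H →ₗ[k] H ⊗[k] H :=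
  TensorProduct.lift (LinearMap.mk₂ k
    (fun h h' : H => (h ⊗ₜ[k] (1 : H)) * Wh.comul h')
    (by intro a b c; simp [TensorProduct.add_tmul, add_mul])
    (by intro t a c; show (t • a) ⊗ₜ[k] (1:H) * Wh.comul c = _; rw [← TensorProduct.smul_tmul', smul_mul_assoc])
    (by intro a b c; simp [map_add, mul_add])
    (by intro t a c; simp [map_smul, mul_smul_comm]))

/-- The `H^L`-balancing relations in `H ⊗ₖ H`, whose quotient is
`H ⊗_{H^L} H`. -/
noncomputable def balHL : Submodule k (H ⊗[k] H) :=
  Submodule.span k {z | ∃ (h h' w : H), w ∈ HLset k H Wh ∧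
    z = (h * w) ⊗ₜ[k] h' - h ⊗ₜ[k] (w * h')}

/-!
The candidate inverse is `β(g ⊗ m) = g S(m₍₁₎) ⊗ m₍₂₎` on `H ⊗ₖ H`. The antipode axioms turn
`can ∘ β` into `g ⊗ m ↦ g Π^R(m₍₁₎) ⊗ m₍₂₎ = (g ⊗ m) Δ(1)`, which is the identity on `C` and
shows that `can` maps onto `C`; they turn `β ∘ can` into `g ⊗ m ↦ g Π^L(m₍₁₎) ⊗ m₍₂₎`, which is
`H^L`-balanced-equal to `g ⊗ Π^L(m₍₁₎) m₍₂₎ = g ⊗ m`, so the kernel of `can` consists of balancing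
relations. Conversely `Δ(Π^L(x) m) = (Π^L(x) ⊗ 1) Δ(m)` makes `can` kill those relations. The
identities for `Π^L`, `Π^R` are weak bialgebra facts, coming from the weak unit axioms for `Δ²(1)`.
-/

namespace TensorProduct

variable {k A B C : Type} [CommRing k] [Ring A] [Algebra k A] [Ring B] [Algebra k B]
  [Ring C] [Algebra k C]

theorem assoc_mul (x y : (A ⊗[k] B) ⊗[k] C) :
    TensorProduct.assoc k A B C (x * y) =
      TensorProduct.assoc k A B C x * TensorProduct.assoc k A B C y :=
  map_mul (Algebra.TensorProduct.assoc k k k A B C) x y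

theorem assoc_symm_mul (x y : A ⊗[k] (B ⊗[k] C)) :
    (TensorProduct.assoc k A B C).symm (x * y) =
      (TensorProduct.assoc k A B C).symm x * (TensorProduct.assoc k A B C).symm y :=
  map_mul (Algebra.TensorProduct.assoc k k k A B C).symm x y

theorem lid_rTensor_mul_one_tmul (f : A →ₗ[k] k) (x : A ⊗[k] B) (b : B) :
    TensorProduct.lid k B (rTensor B f (x * (1 ⊗ₜ[k] b))) =
      TensorProduct.lid k B (rTensor B f x) * b := by
  induction x using TensorProduct.induction_on with
  | zero => simp
  | tmul a c => simp [Algebra.TensorProduct.tmul_mul_tmul]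
  | add x y hx hy => simp only [add_mul, map_add, hx, hy]

theorem tmul_one_mul_rTensor (f g : A →ₗ[k] A) (a : A) (s : A ⊗[k] A) :
    (f a ⊗ₜ[k] (1 : A)) * rTensor A g s =
      rTensor A (mul' k A ∘ₗ map f g) ((TensorProduct.assoc k A A A).symm (a ⊗ₜ[k] s)) := by
  induction s using TensorProduct.induction_on with
  | zero => simp
  | tmul b c => simp [Algebra.TensorProduct.tmul_mul_tmul]
  | add s t hs ht => simp only [tmul_add, map_add, mul_add, hs, ht]

end TensorProduct

namespace WeakBialgebra

variable {k H : Type} [CommRing k] [Ring H] [Algebra k H] (W : WeakBialgebra k H)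

theorem comul_one_mul (m : H) : W.comul 1 * W.comul m = W.comul m := by
  rw [← W.comul_mul, one_mul]

theorem comul_mul_comul_one (m : H) : W.comul m * W.comul 1 = W.comul m := by
  rw [← W.comul_mul, mul_one]

theorem lTensor_comul_mul (x y : H ⊗[k] H) :
    lTensor H W.comul (x * y) = lTensor H W.comul x * lTensor H W.comul y := by
  induction x using TensorProduct.induction_on with
  | zero => simp
  | tmul a b =>
    induction y using TensorProduct.induction_on with
    | zero => simp
    | tmul c d => simp [Algebra.TensorProduct.tmul_mul_tmul, W.comul_mul]
    | add y z hy hz => simp only [mul_add, map_add, hy, hz]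
  | add x z hx hz => simp only [add_mul, map_add, hx, hz]

theorem rTensor_assoc_symm_lTensor_comul {M : Type} [AddCommGroup M] [Module k M]
    (F : H ⊗[k] H →ₗ[k] M) (m : H) :
    rTensor H F ((TensorProduct.assoc k H H H).symm (lTensor H W.comul (W.comul m))) =
      rTensor H (F ∘ₗ W.comul) (W.comul m) := by
  rw [← W.coassoc, LinearEquiv.symm_apply_apply, rTensor_comp_apply]

/-- `Π^L` as a linear map: `h ↦ ε(1₍₁₎ h) 1₍₂₎`. -/
noncomputable def piL : H →ₗ[k] H :=
  (TensorProduct.lid k H).toLinearMap ∘ₗ rTensor H W.counit ∘ₗ mulLeft k (W.comul 1) ∘ₗ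
    (TensorProduct.mk k H H).flip 1

/-- `Π^R` as a linear map: `h ↦ 1₍₁₎ ε(h 1₍₂₎)`. -/
noncomputable def piR : H →ₗ[k] H :=
  (TensorProduct.rid k H).toLinearMap ∘ₗ lTensor H W.counit ∘ₗ mulRight k (W.comul 1) ∘ₗ
    TensorProduct.mk k H H 1

theorem piL_apply (h : H) : W.piL h = PiL k H W h := by
  simp only [piL, PiL, coe_comp, LinearEquiv.coe_coe, Function.comp_apply, mulLeft_apply,
    flip_apply, TensorProduct.mk_apply]
  induction W.comul 1 using TensorProduct.induction_on with
  | zero => simp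
  | tmul a b => simp [Algebra.TensorProduct.tmul_mul_tmul]
  | add x y hx hy => simp only [add_mul, map_add, hx, hy]

theorem piR_apply (h : H) : W.piR h = PiR k H W h := by
  simp only [piR, PiR, coe_comp, LinearEquiv.coe_coe, Function.comp_apply, mulRight_apply,
    TensorProduct.mk_apply]
  induction W.comul 1 using TensorProduct.induction_on with
  | zero => simp
  | tmul a b => simp [Algebra.TensorProduct.tmul_mul_tmul]
  | add x y hx hy => simp only [mul_add, map_add, hx, hy]

theorem comul_lid_rTensor_comul_one (f : H →ₗ[k] k) :
    W.comul (TensorProduct.lid k H (rTensor H f (W.comul 1))) =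
      (TensorProduct.lid k H (rTensor H f (W.comul 1)) ⊗ₜ[k] (1 : H)) * W.comul 1 := by
  have comul_lid : ∀ t : H ⊗[k] H, W.comul (TensorProduct.lid k H (rTensor H f t)) =
      TensorProduct.lid k (H ⊗[k] H) (rTensor (H ⊗[k] H) f (lTensor H W.comul t)) := by
    intro t
    induction t using TensorProduct.induction_on with
    | zero => simp
    | tmul a b => simp
    | add s t hs ht => simp only [map_add, hs, ht]
  have lid_assoc : ∀ y : H ⊗[k] H, TensorProduct.lid k (H ⊗[k] H)
      (rTensor (H ⊗[k] H) f (TensorProduct.assoc k H H H (y ⊗ₜ[k] (1 : H)))) =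
        TensorProduct.lid k H (rTensor H f y) ⊗ₜ[k] (1 : H) := by
    intro y
    induction y using TensorProduct.induction_on with
    | zero => simp
    | tmul a b => simp [smul_tmul']
    | add y z hy hz => simp only [add_tmul, map_add, hy, hz]
  rw [comul_lid, ← W.coassoc, W.weak_unit_l, TensorProduct.assoc_mul,
    LinearEquiv.apply_symm_apply, lid_rTensor_mul_one_tmul, lid_assoc]

theorem comul_PiL (x : H) :
    W.comul (PiL k H W x) = (PiL k H W x ⊗ₜ[k] (1 : H)) * W.comul 1 :=
  W.comul_lid_rTensor_comul_one _

theorem mul'_rTensor_piL_comul (m : H) : mul' k H (rTensor H W.piL (W.comul m)) = m := by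
  have slice : ∀ t : H ⊗[k] H, mul' k H (rTensor H W.piL t) =
      TensorProduct.lid k H (rTensor H W.counit (W.comul 1 * t)) := by
    intro t
    induction t using TensorProduct.induction_on with
    | zero => simp
    | tmul a b =>
      have hab : a ⊗ₜ[k] b = (a ⊗ₜ[k] (1 : H)) * ((1 : H) ⊗ₜ[k] b) := by
        rw [Algebra.TensorProduct.tmul_mul_tmul, mul_one, one_mul]
      rw [rTensor_tmul, mul'_apply, hab, ← mul_assoc, lid_rTensor_mul_one_tmul]
      rfl
    | add s t hs ht => simp only [map_add, mul_add, hs, ht]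
  rw [slice, comul_one_mul, W.counit_comul]

theorem rTensor_piR_comul (m : H) :
    rTensor H W.piR (W.comul m) = ((1 : H) ⊗ₜ[k] m) * W.comul 1 := by
  set Ψ : (H ⊗[k] H) ⊗[k] H →ₗ[k] H ⊗[k] H :=
    rTensor H ((TensorProduct.rid k H).toLinearMap ∘ₗ lTensor H W.counit)
  have Ψ_counit : ∀ t : H ⊗[k] H,
      Ψ ((TensorProduct.assoc k H H H).symm (lTensor H W.comul t)) = t := by
    have hcounit : ((TensorProduct.lid k H).toLinearMap ∘ₗ rTensor H W.counit) ∘ₗ W.comul =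
        LinearMap.id := LinearMap.ext W.counit_comul
    have hΨ : Ψ ∘ₗ (TensorProduct.assoc k H H H).symm.toLinearMap ∘ₗ lTensor H W.comul =
        lTensor H (((TensorProduct.lid k H).toLinearMap ∘ₗ rTensor H W.counit) ∘ₗ W.comul) := by
      rw [lTensor_comp, ← comp_assoc]
      congr 1
      ext a b c
      simp [Ψ, smul_tmul']
    rw [hcounit, lTensor_id] at hΨ
    exact LinearMap.congr_fun hΨ
  have Ψ_piR : ∀ t : H ⊗[k] H,
      Ψ ((TensorProduct.assoc k H H H).symm ((1 : H) ⊗ₜ[k] t) * (W.comul 1 ⊗ₜ[k] (1 : H))) =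
        rTensor H W.piR t := by
    intro t
    induction t using TensorProduct.induction_on with
    | zero => simp
    | tmul a b => simp [Ψ, piR, Algebra.TensorProduct.tmul_mul_tmul]
    | add s t hs ht => simp only [tmul_add, map_add, add_mul, hs, ht]
  -- `Ψ = id ⊗ ε ⊗ id` applied to `(id ⊗ Δ)((1 ⊗ m) Δ(1)) = (1 ⊗ Δ(m)) (Δ(1) ⊗ 1)`
  rw [← Ψ_piR, ← Ψ_counit ((1 ⊗ₜ[k] m) * W.comul 1), lTensor_comul_mul, lTensor_tmul,
    ← W.coassoc, W.weak_unit_r, TensorProduct.assoc_symm_mul, LinearEquiv.symm_apply_apply,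
    ← mul_assoc, ← TensorProduct.assoc_symm_mul, Algebra.TensorProduct.tmul_mul_tmul, one_mul,
    comul_mul_comul_one]

end WeakBialgebra

namespace WeakHopfAlgebra

variable {k H : Type} [CommRing k] [Ring H] [Algebra k H] (Wh : WeakHopfAlgebra k H)

theorem mul'_lTensor_S_comp_comul :
    (mul' k H ∘ₗ map LinearMap.id Wh.S) ∘ₗ Wh.comul = Wh.piL :=
  LinearMap.ext fun h => (Wh.S_left h).trans (Wh.piL_apply h).symm

theorem mul'_rTensor_S_comp_comul :
    (mul' k H ∘ₗ map Wh.S LinearMap.id) ∘ₗ Wh.comul = Wh.piR :=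
  LinearMap.ext fun h => (Wh.S_right h).trans (Wh.piR_apply h).symm

theorem canMap_tmul (a b : H) : canMap k H Wh (a ⊗ₜ[k] b) = (a ⊗ₜ[k] (1 : H)) * Wh.comul b :=
  rfl

theorem canMap_tmul_one_mul (g : H) (t : H ⊗[k] H) :
    canMap k H Wh ((g ⊗ₜ[k] (1 : H)) * t) = (g ⊗ₜ[k] (1 : H)) * canMap k H Wh t := by
  induction t using TensorProduct.induction_on with
  | zero => simp
  | tmul a b =>
    rw [Algebra.TensorProduct.tmul_mul_tmul, one_mul, canMap_tmul, canMap_tmul, ← mul_assoc,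
      Algebra.TensorProduct.tmul_mul_tmul, mul_one]
  | add s t hs ht => simp only [mul_add, map_add, hs, ht]

theorem canMap_mul_comul_one (z : H ⊗[k] H) :
    canMap k H Wh z * Wh.comul 1 = canMap k H Wh z := by
  induction z using TensorProduct.induction_on with
  | zero => simp
  | tmul a b => rw [canMap_tmul, mul_assoc, Wh.comul_mul_comul_one]
  | add s t hs ht => rw [map_add, add_mul, hs, ht]

theorem canMap_rTensor (f : H →ₗ[k] H) (t : H ⊗[k] H) :
    canMap k H Wh (rTensor H f t) =
      rTensor H (mul' k H ∘ₗ map f LinearMap.id)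
        ((TensorProduct.assoc k H H H).symm (lTensor H Wh.comul t)) := by
  induction t using TensorProduct.induction_on with
  | zero => simp
  | tmul a b =>
    rw [rTensor_tmul, canMap_tmul, lTensor_tmul, ← tmul_one_mul_rTensor, rTensor_id_apply]
  | add s t hs ht => simp only [map_add, hs, ht]

theorem canMap_rTensor_S_comul (m : H) :
    canMap k H Wh (rTensor H Wh.S (Wh.comul m)) = ((1 : H) ⊗ₜ[k] m) * Wh.comul 1 := by
  rw [canMap_rTensor, Wh.rTensor_assoc_symm_lTensor_comul, mul'_rTensor_S_comp_comul,
    Wh.rTensor_piR_comul]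

/-- The lift to `H ⊗ₖ H` of `can⁻¹`: `g ⊗ m ↦ g S(m₍₁₎) ⊗ m₍₂₎`. -/
noncomputable def canInv : H ⊗[k] H →ₗ[k] H ⊗[k] H :=
  mul' k (H ⊗[k] H) ∘ₗ map ((TensorProduct.mk k H H).flip 1) (rTensor H Wh.S ∘ₗ Wh.comul)

theorem canInv_tmul (g m : H) :
    canInv Wh (g ⊗ₜ[k] m) = (g ⊗ₜ[k] (1 : H)) * rTensor H Wh.S (Wh.comul m) := by
  simp [canInv]

theorem canInv_tmul_one_mul (g : H) (t : H ⊗[k] H) :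
    canInv Wh ((g ⊗ₜ[k] (1 : H)) * t) = (g ⊗ₜ[k] (1 : H)) * canInv Wh t := by
  induction t using TensorProduct.induction_on with
  | zero => simp
  | tmul a b =>
    rw [Algebra.TensorProduct.tmul_mul_tmul, one_mul, canInv_tmul, canInv_tmul, ← mul_assoc,
      Algebra.TensorProduct.tmul_mul_tmul, mul_one]
  | add s t hs ht => simp only [mul_add, map_add, hs, ht]

theorem canInv_eq (t : H ⊗[k] H) :
    canInv Wh t = rTensor H (mul' k H ∘ₗ map LinearMap.id Wh.S)
      ((TensorProduct.assoc k H H H).symm (lTensor H Wh.comul t)) := by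
  induction t using TensorProduct.induction_on with
  | zero => simp
  | tmul a b => rw [canInv_tmul, lTensor_tmul, ← tmul_one_mul_rTensor, LinearMap.id_apply]
  | add s t hs ht => simp only [map_add, hs, ht]

theorem canMap_canInv (y : H ⊗[k] H) : canMap k H Wh (canInv Wh y) = y * Wh.comul 1 := by
  induction y using TensorProduct.induction_on with
  | zero => simp
  | tmul g m =>
    rw [canInv_tmul, canMap_tmul_one_mul, canMap_rTensor_S_comul, ← mul_assoc,
      Algebra.TensorProduct.tmul_mul_tmul, mul_one, one_mul]
  | add s t hs ht => simp only [map_add, add_mul, hs, ht]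

theorem canInv_comul (m : H) : canInv Wh (Wh.comul m) = rTensor H Wh.piL (Wh.comul m) := by
  rw [canInv_eq, Wh.rTensor_assoc_symm_lTensor_comul, mul'_lTensor_S_comp_comul]

theorem tmul_one_mul_rTensor_piL_sub_mem_balHL (g : H) (t : H ⊗[k] H) :
    (g ⊗ₜ[k] (1 : H)) * rTensor H Wh.piL t - g ⊗ₜ[k] mul' k H (rTensor H Wh.piL t) ∈
      balHL k H Wh := by
  induction t using TensorProduct.induction_on with
  | zero => simp
  | tmul a b =>
    refine Submodule.subset_span ⟨g, b, Wh.piL a, ⟨a, (Wh.piL_apply a).symm⟩, ?_⟩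
    rw [rTensor_tmul, mul'_apply, Algebra.TensorProduct.tmul_mul_tmul, one_mul]
  | add s t hs ht =>
    rw [map_add, mul_add, map_add, tmul_add, add_sub_add_comm]
    exact add_mem hs ht

theorem sub_canInv_canMap_mem_balHL (z : H ⊗[k] H) :
    z - canInv Wh (canMap k H Wh z) ∈ balHL k H Wh := by
  induction z using TensorProduct.induction_on with
  | zero => simp
  | tmul g m =>
    have h := neg_mem (Wh.tmul_one_mul_rTensor_piL_sub_mem_balHL g (Wh.comul m))
    rwa [neg_sub, Wh.mul'_rTensor_piL_comul, ← canInv_comul, ← canInv_tmul_one_mul] at h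
  | add s t hs ht =>
    rw [map_add, map_add, add_sub_add_comm]
    exact add_mem hs ht

theorem balHL_le_ker_canMap : balHL k H Wh ≤ ker (canMap k H Wh) := by
  refine Submodule.span_le.mpr ?_
  rintro _ ⟨g, m, _, ⟨x, rfl⟩, rfl⟩
  have comul_PiL_mul : Wh.comul (PiL k H Wh.toWeakBialgebra x * m) =
      (PiL k H Wh.toWeakBialgebra x ⊗ₜ[k] (1 : H)) * Wh.comul m := by
    rw [Wh.comul_mul, Wh.comul_PiL, mul_assoc, Wh.comul_one_mul]
  rw [SetLike.mem_coe, mem_ker, map_sub, canMap_tmul, canMap_tmul, comul_PiL_mul, ← mul_assoc,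
    Algebra.TensorProduct.tmul_mul_tmul, mul_one, sub_self]

theorem canInv_one_tmul_mul_comul_one {ι κ : Type} {sι : Finset ι} {sκ : Finset κ}
    {e1 e2 e3 : ι → H} {h1 h2 : κ → H} {h : H}
    (hrep : rTensor H Wh.comul (Wh.comul 1) = ∑ i ∈ sι, (e1 i ⊗ₜ[k] e2 i) ⊗ₜ[k] e3 i)
    (hΔ : Wh.comul h = ∑ j ∈ sκ, h1 j ⊗ₜ[k] h2 j) :
    canInv Wh (((1 : H) ⊗ₜ[k] h) * Wh.comul 1) =
      ∑ i ∈ sι, ∑ j ∈ sκ, (e1 i * Wh.S (h1 j * e2 i)) ⊗ₜ[k] (h2 j * e3 i) := by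
  rw [canInv_eq, Wh.lTensor_comul_mul, lTensor_tmul, ← Wh.coassoc, hrep, hΔ]
  simp [Finset.mul_sum, Finset.sum_mul, tmul_sum, Algebra.TensorProduct.tmul_mul_tmul]

end WeakHopfAlgebra

/-- for a weak Hopf algebra `H` (a right comodule algebra over
itself via `Δ`), the canonical map `can : H ⊗_{H^L} H → C = Im(g)`,
`can(h⊗k) = h k₍₁₎ ⊗ k₍₂₎`, is well defined and bijective, with inverse
determined by `can⁻¹(1₍₁₎ ⊗ h1₍₂₎) = 1₍₁₎S(h₍₁₎1₍₂₎) ⊗_{H^L} h₍₂₎1₍₃₎`.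
Hence `H` is a weak `H`-Galois extension of `H^L`.  (Bijectivity of the
induced map on `H ⊗_{H^L} H` is expressed via the balancing submodule, and
the inverse formula via Sweedler representations of `Δ²(1)` and `Δ(h)`.) -/
theorem weak_hopf_self_galois :
    -- `can` descends to `H ⊗_{H^L} H`
    (∀ z ∈ balHL k H Wh, canMap k H Wh z = 0) ∧
    -- the induced map is injective
    (∀ z : H ⊗[k] H, canMap k H Wh z = 0 → z ∈ balHL k H Wh) ∧
    -- `can` lands in `C = Im(g)` and is surjective onto it
    (∀ z : H ⊗[k] H,
      canMap k H Wh z ∈ LinearMap.range (mulRight k (Wh.comul 1))) ∧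
    (∀ c ∈ LinearMap.range (mulRight k (Wh.comul 1)),
      ∃ z : H ⊗[k] H, canMap k H Wh z = c) ∧
    -- the inverse formula: `can(1₍₁₎S(h₍₁₎1₍₂₎) ⊗ h₍₂₎1₍₃₎) = 1₍₁₎ ⊗ h1₍₂₎`
    (∀ (h : H) (ι κ : Type) (sι : Finset ι) (sκ : Finset κ)
      (e1 e2 e3 : ι → H) (h1 h2 : κ → H),
      (rTensor H Wh.comul) (Wh.comul 1) =
        ∑ i ∈ sι, (e1 i ⊗ₜ[k] e2 i) ⊗ₜ[k] e3 i →
      Wh.comul h = ∑ j ∈ sκ, h1 j ⊗ₜ[k] h2 j →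
      canMap k H Wh (∑ i ∈ sι, ∑ j ∈ sκ,
          (e1 i * Wh.S (h1 j * e2 i)) ⊗ₜ[k] (h2 j * e3 i)) =
        ((1 : H) ⊗ₜ[k] h) * Wh.comul 1) := by
  refine ⟨fun z hz => Wh.balHL_le_ker_canMap hz, fun z hz => ?_,
    fun z => ⟨canMap k H Wh z, Wh.canMap_mul_comul_one z⟩, ?_, ?_⟩
  · simpa [hz] using Wh.sub_canInv_canMap_mem_balHL z
  · rintro c ⟨y, rfl⟩
    exact ⟨Wh.canInv y, Wh.canMap_canInv y⟩
  · intro h ι κ sι sκ e1 e2 e3 h1 h2 hrep hΔ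
    rw [← Wh.canInv_one_tmul_mul_comul_one hrep hΔ, Wh.canMap_canInv, mul_assoc,
      Wh.comul_one_mul]
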